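/- In $S = k[X,Y,Z]$, the ideal $I = (X^2 - Y^2, X^2 - Z^2, XY, XZ, YZ)$ satisfies $I = (X^3, Y^3, Z^3) : (X^2Y^2 + X^2Z^2 + Y^2Z^2)$. -/
import Mathlib

open MvPolynomial Finsupp in
private lemma stmt17_mono_eq {k : Type*} [CommRing k] (a : k) (i j l : ℕ) :
    (monomial (single 0 i + single 1 j + single 2 l) a : MvPolynomial (Fin 3) k)
      = C a * (X 0 ^ i * X 1 ^ j * X 2 ^ l) := by
  rw [X_pow_eq_monomial, X_pow_eq_monomial, X_pow_eq_monomial, monomial_mul, monomial_mul,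
    C_mul_monomial]
  simp

open MvPolynomial Finsupp in
private lemma stmt17_coeff_pX {k : Type*} [CommRing k] (p : MvPolynomial (Fin 3) k) (i : Fin 3)
    (m : Fin 3 →₀ ℕ) (h : m i < 3) : coeff m (p * X i ^ 3) = 0 := by
  rw [X_pow_eq_monomial, coeff_mul_monomial', if_neg]
  intro hle
  have := hle i
  rw [single_apply, if_pos rfl] at this
  omega

open MvPolynomial Finsupp in
set_option maxHeartbeats 2000000 in
private lemma stmt17_extract {k : Type*} [CommRing k] (a b c d e : k)
    (p q r : MvPolynomial (Fin 3) k)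
    (heq : (C a + C b * X 0 + C c * X 1 + C d * X 2 + C e * X 0 ^ 2) *
        (X 0 ^ 2 * X 1 ^ 2 + X 0 ^ 2 * X 2 ^ 2 + X 1 ^ 2 * X 2 ^ 2)
      = p * X 0 ^ 3 + q * X 1 ^ 3 + r * X 2 ^ 3) :
    a = 0 ∧ b = 0 ∧ c = 0 ∧ d = 0 ∧ e = 0 := by
  have hexp : (C a + C b * X 0 + C c * X 1 + C d * X 2 + C e * X 0 ^ 2) *
        (X 0 ^ 2 * X 1 ^ 2 + X 0 ^ 2 * X 2 ^ 2 + X 1 ^ 2 * X 2 ^ 2)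
      = (monomial (single 0 2 + single 1 2 + single 2 0) a : MvPolynomial (Fin 3) k)
      + monomial (single 0 2 + single 1 0 + single 2 2) a
      + monomial (single 0 0 + single 1 2 + single 2 2) a
      + monomial (single 0 3 + single 1 2 + single 2 0) b
      + monomial (single 0 3 + single 1 0 + single 2 2) b
      + monomial (single 0 1 + single 1 2 + single 2 2) b
      + monomial (single 0 2 + single 1 3 + single 2 0) c
      + monomial (single 0 2 + single 1 1 + single 2 2) c
      + monomial (single 0 0 + single 1 3 + single 2 2) c
      + monomial (single 0 2 + single 1 2 + single 2 1) d
      + monomial (single 0 2 + single 1 0 + single 2 3) d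
      + monomial (single 0 0 + single 1 2 + single 2 3) d
      + monomial (single 0 4 + single 1 2 + single 2 0) e
      + monomial (single 0 4 + single 1 0 + single 2 2) e
      + monomial (single 0 2 + single 1 2 + single 2 2) e := by
    simp only [stmt17_mono_eq]; ring
  replace heq := hexp.symm.trans heq
  have key : ∀ m : Fin 3 →₀ ℕ, m 0 < 3 → m 1 < 3 → m 2 < 3 →
      coeff m ((monomial (single 0 2 + single 1 2 + single 2 0) a : MvPolynomial (Fin 3) k)
      + monomial (single 0 2 + single 1 0 + single 2 2) a
      + monomial (single 0 0 + single 1 2 + single 2 2) a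
      + monomial (single 0 3 + single 1 2 + single 2 0) b
      + monomial (single 0 3 + single 1 0 + single 2 2) b
      + monomial (single 0 1 + single 1 2 + single 2 2) b
      + monomial (single 0 2 + single 1 3 + single 2 0) c
      + monomial (single 0 2 + single 1 1 + single 2 2) c
      + monomial (single 0 0 + single 1 3 + single 2 2) c
      + monomial (single 0 2 + single 1 2 + single 2 1) d
      + monomial (single 0 2 + single 1 0 + single 2 3) d
      + monomial (single 0 0 + single 1 2 + single 2 3) d
      + monomial (single 0 4 + single 1 2 + single 2 0) e
      + monomial (single 0 4 + single 1 0 + single 2 2) e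
      + monomial (single 0 2 + single 1 2 + single 2 2) e) = 0 := by
    intro m h0 h1 h2
    rw [heq]
    rw [coeff_add, coeff_add, stmt17_coeff_pX _ _ _ h0, stmt17_coeff_pX _ _ _ h1,
      stmt17_coeff_pX _ _ _ h2]
    ring
  refine ⟨?_, ?_, ?_, ?_, ?_⟩
  · have h := key (single 0 2 + single 1 2) (by simp [single_apply]) (by simp [single_apply])
      (by simp [single_apply])
    simp only [coeff_add, coeff_monomial] at h
    simpa [Finsupp.ext_iff, Fin.forall_fin_succ, single_apply] using h
  · have h := key (single 0 1 + single 1 2 + single 2 2) (by simp [single_apply])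
      (by simp [single_apply]) (by simp [single_apply])
    simp only [coeff_add, coeff_monomial] at h
    simpa [Finsupp.ext_iff, Fin.forall_fin_succ, single_apply] using h
  · have h := key (single 0 2 + single 1 1 + single 2 2) (by simp [single_apply])
      (by simp [single_apply]) (by simp [single_apply])
    simp only [coeff_add, coeff_monomial] at h
    simpa [Finsupp.ext_iff, Fin.forall_fin_succ, single_apply] using h
  · have h := key (single 0 2 + single 1 2 + single 2 1) (by simp [single_apply])
      (by simp [single_apply]) (by simp [single_apply])
    simp only [coeff_add, coeff_monomial] at h
    simpa [Finsupp.ext_iff, Fin.forall_fin_succ, single_apply] using h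
  · have h := key (single 0 2 + single 1 2 + single 2 2) (by simp [single_apply])
      (by simp [single_apply]) (by simp [single_apply])
    simp only [coeff_add, coeff_monomial] at h
    simpa [Finsupp.ext_iff, Fin.forall_fin_succ, single_apply] using h

open MvPolynomial in
private lemma stmt17_decomp {k : Type*} [CommRing k] (s : MvPolynomial (Fin 3) k) :
    ∃ a b c d e : k, s - (C a + C b * X 0 + C c * X 1 + C d * X 2 + C e * X 0 ^ 2) ∈
      Ideal.span {(X 0 : MvPolynomial (Fin 3) k) ^ 2 - X 1 ^ 2, X 0 ^ 2 - X 2 ^ 2,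
        X 0 * X 1, X 0 * X 2, X 1 * X 2} := by
  set I := Ideal.span {(X 0 : MvPolynomial (Fin 3) k) ^ 2 - X 1 ^ 2, X 0 ^ 2 - X 2 ^ 2,
        X 0 * X 1, X 0 * X 2, X 1 * X 2} with hI
  have g1 : (X 0 : MvPolynomial (Fin 3) k) ^ 2 - X 1 ^ 2 ∈ I := Ideal.subset_span (by simp)
  have g2 : (X 0 : MvPolynomial (Fin 3) k) ^ 2 - X 2 ^ 2 ∈ I := Ideal.subset_span (by simp)
  have g3 : (X 0 : MvPolynomial (Fin 3) k) * X 1 ∈ I := Ideal.subset_span (by simp)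
  have g4 : (X 0 : MvPolynomial (Fin 3) k) * X 2 ∈ I := Ideal.subset_span (by simp)
  have g5 : (X 1 : MvPolynomial (Fin 3) k) * X 2 ∈ I := Ideal.subset_span (by simp)
  induction s using MvPolynomial.induction_on with
  | C a => exact ⟨a, 0, 0, 0, 0, by simp⟩
  | add p q hp hq =>
    obtain ⟨a, b, c, d, e, hp⟩ := hp
    obtain ⟨a', b', c', d', e', hq⟩ := hq
    refine ⟨a + a', b + b', c + c', d + d', e + e', ?_⟩
    have : p + q - (C (a+a') + C (b+b') * X 0 + C (c+c') * X 1 + C (d+d') * X 2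
        + C (e+e') * X 0 ^ 2)
        = (p - (C a + C b * X 0 + C c * X 1 + C d * X 2 + C e * X 0 ^ 2))
        + (q - (C a' + C b' * X 0 + C c' * X 1 + C d' * X 2 + C e' * X 0 ^ 2)) := by
      simp only [map_add]; ring
    rw [this]; exact Ideal.add_mem _ hp hq
  | mul_X p i hp =>
    obtain ⟨a, b, c, d, e, hp⟩ := hp
    fin_cases i
    · refine ⟨0, a, 0, 0, b, ?_⟩
      show p * X 0 - (C (0:k) + C a * X 0 + C 0 * X 1 + C 0 * X 2 + C b * X 0 ^ 2) ∈ I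
      have : p * X 0 - (C (0:k) + C a * X 0 + C 0 * X 1 + C 0 * X 2 + C b * X 0 ^ 2)
          = (p - (C a + C b * X 0 + C c * X 1 + C d * X 2 + C e * X 0 ^ 2)) * X 0
          + C c * (X 0 * X 1) + C d * (X 0 * X 2)
          + C e * X 0 * (X 0 ^ 2 - X 1 ^ 2) + C e * X 1 * (X 0 * X 1) := by
        simp only [map_zero]; ring
      rw [this]
      exact add_mem (add_mem (add_mem (add_mem (Ideal.mul_mem_right _ _ hp)
        (Ideal.mul_mem_left _ _ g3)) (Ideal.mul_mem_left _ _ g4))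
        (Ideal.mul_mem_left _ _ g1)) (Ideal.mul_mem_left _ _ g3)
    · refine ⟨0, 0, a, 0, c, ?_⟩
      show p * X 1 - (C (0:k) + C 0 * X 0 + C a * X 1 + C 0 * X 2 + C c * X 0 ^ 2) ∈ I
      have : p * X 1 - (C (0:k) + C 0 * X 0 + C a * X 1 + C 0 * X 2 + C c * X 0 ^ 2)
          = (p - (C a + C b * X 0 + C c * X 1 + C d * X 2 + C e * X 0 ^ 2)) * X 1
          + C b * (X 0 * X 1) + C d * (X 1 * X 2)
          + (- C c) * (X 0 ^ 2 - X 1 ^ 2) + C e * X 0 * (X 0 * X 1) := by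
        simp only [map_zero]; ring
      rw [this]
      exact add_mem (add_mem (add_mem (add_mem (Ideal.mul_mem_right _ _ hp)
        (Ideal.mul_mem_left _ _ g3)) (Ideal.mul_mem_left _ _ g5))
        (Ideal.mul_mem_left _ _ g1)) (Ideal.mul_mem_left _ _ g3)
    · refine ⟨0, 0, 0, a, d, ?_⟩
      show p * X 2 - (C (0:k) + C 0 * X 0 + C 0 * X 1 + C a * X 2 + C d * X 0 ^ 2) ∈ I
      have : p * X 2 - (C (0:k) + C 0 * X 0 + C 0 * X 1 + C a * X 2 + C d * X 0 ^ 2)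
          = (p - (C a + C b * X 0 + C c * X 1 + C d * X 2 + C e * X 0 ^ 2)) * X 2
          + C b * (X 0 * X 2) + C c * (X 1 * X 2)
          + (- C d) * (X 0 ^ 2 - X 2 ^ 2) + C e * X 0 * (X 0 * X 2) := by
        simp only [map_zero]; ring
      rw [this]
      exact add_mem (add_mem (add_mem (add_mem (Ideal.mul_mem_right _ _ hp)
        (Ideal.mul_mem_left _ _ g4)) (Ideal.mul_mem_left _ _ g5))
        (Ideal.mul_mem_left _ _ g2)) (Ideal.mul_mem_left _ _ g4)

open MvPolynomial in
/-- In `S = k[X,Y,Z]` (char `k ≠ 2`),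
`(X²-Y², X²-Z², XY, XZ, YZ) = (X³, Y³, Z³) : (X²Y² + X²Z² + Y²Z²)`. -/
theorem stmt_17 (k : Type*) [Field k] (h2 : (2 : k) ≠ 0) :
    Ideal.span {(X 0 : MvPolynomial (Fin 3) k) ^ 2 - X 1 ^ 2, X 0 ^ 2 - X 2 ^ 2,
        X 0 * X 1, X 0 * X 2, X 1 * X 2}
      = Submodule.colon
          (Ideal.span {(X 0 : MvPolynomial (Fin 3) k) ^ 3, X 1 ^ 3, X 2 ^ 3})
          (Ideal.span {(X 0 : MvPolynomial (Fin 3) k) ^ 2 * X 1 ^ 2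
            + X 0 ^ 2 * X 2 ^ 2 + X 1 ^ 2 * X 2 ^ 2}) := by
  set f : MvPolynomial (Fin 3) k :=
    X 0 ^ 2 * X 1 ^ 2 + X 0 ^ 2 * X 2 ^ 2 + X 1 ^ 2 * X 2 ^ 2 with hf
  set J : Ideal (MvPolynomial (Fin 3) k) :=
    Ideal.span {(X 0 : MvPolynomial (Fin 3) k) ^ 3, X 1 ^ 3, X 2 ^ 3} with hJ
  have j1 : (X 0 : MvPolynomial (Fin 3) k) ^ 3 ∈ J := Ideal.subset_span (by simp)
  have j2 : (X 1 : MvPolynomial (Fin 3) k) ^ 3 ∈ J := Ideal.subset_span (by simp)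
  have j3 : (X 2 : MvPolynomial (Fin 3) k) ^ 3 ∈ J := Ideal.subset_span (by simp)
  have hle : Ideal.span {(X 0 : MvPolynomial (Fin 3) k) ^ 2 - X 1 ^ 2, X 0 ^ 2 - X 2 ^ 2,
      X 0 * X 1, X 0 * X 2, X 1 * X 2} ≤ Submodule.colon J (Ideal.span {f}) := by
    rw [Ideal.span_le]
    rintro g (rfl | rfl | rfl | rfl | rfl) <;> rw [SetLike.mem_coe, Ideal.mem_colon_span_singleton]
    · have : ((X 0 : MvPolynomial (Fin 3) k) ^ 2 - X 1 ^ 2) * f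
          = (X 0 * X 1 ^ 2 + X 0 * X 2 ^ 2) * X 0 ^ 3
            - (X 0 ^ 2 * X 1 + X 1 * X 2 ^ 2) * X 1 ^ 3 := by rw [hf]; ring
      rw [this]
      exact sub_mem (Ideal.mul_mem_left _ _ j1) (Ideal.mul_mem_left _ _ j2)
    · have : ((X 0 : MvPolynomial (Fin 3) k) ^ 2 - X 2 ^ 2) * f
          = (X 0 * X 1 ^ 2 + X 0 * X 2 ^ 2) * X 0 ^ 3
            - (X 0 ^ 2 * X 2 + X 1 ^ 2 * X 2) * X 2 ^ 3 := by rw [hf]; ring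
      rw [this]
      exact sub_mem (Ideal.mul_mem_left _ _ j1) (Ideal.mul_mem_left _ _ j3)
    · have : ((X 0 : MvPolynomial (Fin 3) k) * X 1) * f
          = (X 1 ^ 3 + X 1 * X 2 ^ 2) * X 0 ^ 3 + (X 0 * X 2 ^ 2) * X 1 ^ 3 := by
        rw [hf]; ring
      rw [this]
      exact add_mem (Ideal.mul_mem_left _ _ j1) (Ideal.mul_mem_left _ _ j2)
    · have : ((X 0 : MvPolynomial (Fin 3) k) * X 2) * f
          = (X 1 ^ 2 * X 2) * X 0 ^ 3 + (X 0 ^ 3 + X 0 * X 1 ^ 2) * X 2 ^ 3 := by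
        rw [hf]; ring
      rw [this]
      exact add_mem (Ideal.mul_mem_left _ _ j1) (Ideal.mul_mem_left _ _ j3)
    · have : ((X 1 : MvPolynomial (Fin 3) k) * X 2) * f
          = (X 0 ^ 2 * X 2 + X 2 ^ 3) * X 1 ^ 3 + (X 0 ^ 2 * X 1) * X 2 ^ 3 := by
        rw [hf]; ring
      rw [this]
      exact add_mem (Ideal.mul_mem_left _ _ j2) (Ideal.mul_mem_left _ _ j3)
  refine le_antisymm hle ?_
  intro s hs
  rw [Ideal.mem_colon_span_singleton] at hs
  obtain ⟨a, b, c, d, e, ht⟩ := stmt17_decomp (k := k) s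
  set n : MvPolynomial (Fin 3) k := C a + C b * X 0 + C c * X 1 + C d * X 2 + C e * X 0 ^ 2
    with hn
  have htf : (s - n) * f ∈ J := by
    rw [← Ideal.mem_colon_span_singleton]
    exact hle ht
  have hnf : n * f ∈ J := by
    have : n * f = s * f - (s - n) * f := by ring
    rw [this]
    exact sub_mem hs htf
  rw [hJ] at hnf
  rw [show ({(X 0 : MvPolynomial (Fin 3) k) ^ 3, X 1 ^ 3, X 2 ^ 3} : Set _)
    = insert ((X 0 : MvPolynomial (Fin 3) k) ^ 3) (insert (X 1 ^ 3) {X 2 ^ 3}) from rfl,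
    Ideal.mem_span_insert] at hnf
  obtain ⟨p, z, hz, hzeq⟩ := hnf
  rw [Ideal.mem_span_insert] at hz
  obtain ⟨q, w, hw, hweq⟩ := hz
  rw [Ideal.mem_span_singleton] at hw
  obtain ⟨r, hr⟩ := hw
  have heq : n * f = p * X 0 ^ 3 + q * X 1 ^ 3 + r * X 2 ^ 3 := by
    rw [hzeq, hweq, hr]; ring
  rw [hn, hf] at heq
  obtain ⟨ha, hb, hc, hd, he⟩ := stmt17_extract a b c d e p q r heq
  have : s = s - n := by rw [hn, ha, hb, hc, hd, he]; simp
  rw [this]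
  exact ht
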